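/- Two lines in ℙ³ intersect (equivalently, are coplanar) if and only if the bilinear Plücker pairing of their coordinates vanishes: p₀₁q₂₃ - p₀₂q₁₃ + p₀₃q₁₂ + p₂₃q₀₁ - p₁₃q₀₂ + p₁₂q₀₃ = 0, where p and q are the Plücker coordinates of the two lines. -/

import Mathlib

/-!
Two lines meet iff their four spanning vectors `x, y, z, w` are linearly dependent, i.e. iff the
`4 × 4` determinant with rows `x, y, z, w` vanishes; Laplace expansion of that determinant along
its first two rows is the Plücker pairing.
-/

open Submodule

theorem disjoint_span_pair_iff_linearIndependent {R M : Type*} [Ring R] [AddCommGroup M]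
    [Module R M] {x y z w : M} (hxy : LinearIndependent R ![x, y])
    (hzw : LinearIndependent R ![z, w]) :
    Disjoint (span R {x, y}) (span R {z, w}) ↔ LinearIndependent R ![x, y, z, w] := by
  have hsplit : ![x, y, z, w] ∘ finSumFinEquiv = Sum.elim ![x, y] ![z, w] := by
    ext (i | i) <;> fin_cases i <;> rfl
  rw [← linearIndependent_equiv' finSumFinEquiv hsplit, linearIndependent_sum]
  simp only [Sum.elim_comp_inl, Sum.elim_comp_inr, Matrix.range_cons_cons_empty, hxy, hzw,
    true_and]

theorem Matrix.det_of_ne_zero_iff_linearIndependent {K n : Type*} [Field K] [Fintype n]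
    [DecidableEq n] (v : n → n → K) :
    (of v).det ≠ 0 ↔ LinearIndependent K v := by
  rw [← isUnit_iff_ne_zero, ← isUnit_iff_isUnit_det, ← linearIndependent_rows_iff_isUnit]
  rfl

theorem Matrix.det_of_four_rows_eq_pluecker_pairing {R : Type*} [CommRing R]
    (x y z w : Fin 4 → R) :
    (of ![x, y, z, w]).det =
      (x 0 * y 1 - x 1 * y 0) * (z 2 * w 3 - z 3 * w 2)
        - (x 0 * y 2 - x 2 * y 0) * (z 1 * w 3 - z 3 * w 1)
        + (x 0 * y 3 - x 3 * y 0) * (z 1 * w 2 - z 2 * w 1)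
        + (x 2 * y 3 - x 3 * y 2) * (z 0 * w 1 - z 1 * w 0)
        - (x 1 * y 3 - x 3 * y 1) * (z 0 * w 2 - z 2 * w 0)
        + (x 1 * y 2 - x 2 * y 1) * (z 0 * w 3 - z 3 * w 0) := by
  simp [det_succ_row_zero, Fin.sum_univ_succ, Fin.succAbove]
  ring

/-- Two lines in `ℙ³` (2-dimensional subspaces of `K⁴` spanned by `x, y` and
`z, w`) intersect iff the bilinear Plücker pairing of their coordinates
vanishes: `p₀₁q₂₃ - p₀₂q₁₃ + p₀₃q₁₂ + p₂₃q₀₁ - p₁₃q₀₂ + p₁₂q₀₃ = 0`. -/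
theorem lines_meet_iff_pluecker_pairing_vanishes
    {K : Type*} [Field K] (x y z w : Fin 4 → K)
    (hxy : LinearIndependent K ![x, y])
    (hzw : LinearIndependent K ![z, w]) :
    (Submodule.span K {x, y} ⊓ Submodule.span K {z, w} ≠ ⊥) ↔
      (x 0 * y 1 - x 1 * y 0) * (z 2 * w 3 - z 3 * w 2)
        - (x 0 * y 2 - x 2 * y 0) * (z 1 * w 3 - z 3 * w 1)
        + (x 0 * y 3 - x 3 * y 0) * (z 1 * w 2 - z 2 * w 1)
        + (x 2 * y 3 - x 3 * y 2) * (z 0 * w 1 - z 1 * w 0)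
        - (x 1 * y 3 - x 3 * y 1) * (z 0 * w 2 - z 2 * w 0)
        + (x 1 * y 2 - x 2 * y 1) * (z 0 * w 3 - z 3 * w 0) = 0 := by
  rw [← Matrix.det_of_four_rows_eq_pluecker_pairing, ne_eq, ← disjoint_iff,
    disjoint_span_pair_iff_linearIndependent hxy hzw,
    ← Matrix.det_of_ne_zero_iff_linearIndependent, not_not]
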